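/- Let ≿ be a niveloidal preference on 𝓕 with nonconstant affine utility index u : X → ℝ (with 0 in the interior of u(X)) representing it as in the minmax representation. Define B* = {b ∈ 𝒞 : max_{q∈Δ}(∫ u(f) dq − b(q)) ≥ u(x_f) for all f ∈ 𝓕}, where x_f is a certainty equivalent of f. Then: (a) B* is grounded; (b) for every f ∈ 𝓕, min_{b∈B*} max_{q∈Δ}(∫ u(f) dq − b(q)) = u(x_f), so B* satisfies the minmax representation of ≿; and (c) every grounded subset B ⊆ 𝒞 satisfying the minmax representation of ≿ with the same u is contained in B*; thus B* is the unique maximal such grounded subset. -/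

import Mathlib

/-!
A grounded family `B` representing `≿` assigns to every act `f` exactly `u(x_f)`: comparing `f`
with its certainty equivalent reduces this to constant acts, where groundedness makes the minmax
value of the constant `c` equal to `c`. Hence each `b ∈ B` satisfies the inequality defining
`B*`, so `B ⊆ B*`; then `min_{B*} ≤ min_B = u(x_f)`, while `≥` is built into `B*`. Groundedness
of `B*` follows by evaluating a constant act. The inner maxima are attained because
`q ↦ ∫ φ dq - b q` is upper semicontinuous and `Δ` is compact, both already for the product
topology on `Set S → ℝ`, which is finer than the weak* topology.
-/

open scoped Pointwise
open MeasureTheory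

namespace Paper

variable {S V : Type*}

/-- An algebra of subsets of `S` (the events `Σ`). -/
structure IsSetAlg (𝓐 : Set (Set S)) : Prop where
  empty_mem : ∅ ∈ 𝓐
  compl_mem : ∀ A ∈ 𝓐, Aᶜ ∈ 𝓐
  union_mem : ∀ A ∈ 𝓐, ∀ B ∈ 𝓐, A ∪ B ∈ 𝓐

/-- `B₀(Σ)`: real-valued `Σ`-measurable simple functions. -/
def IsSimpleFn (𝓐 : Set (Set S)) (φ : S → ℝ) : Prop :=
  (Set.range φ).Finite ∧ ∀ t : ℝ, φ ⁻¹' {t} ∈ 𝓐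

open Classical in
/-- The integral of a simple function with respect to a finitely additive set function. -/
noncomputable def fint (p : Set S → ℝ) (φ : S → ℝ) : ℝ :=
  if h : (Set.range φ).Finite then ∑ t ∈ h.toFinset, t * p (φ ⁻¹' {t}) else 0

/-- `Δ`: the finitely additive probabilities on `Σ` (canonically extended by `0` off `Σ`). -/
def Δset (𝓐 : Set (Set S)) : Set (Set S → ℝ) :=
  {p | p Set.univ = 1 ∧ (∀ A ∈ 𝓐, 0 ≤ p A) ∧
    (∀ A ∈ 𝓐, ∀ B ∈ 𝓐, Disjoint A B → p (A ∪ B) = p A + p B) ∧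
    ∀ A : Set S, A ∉ 𝓐 → p A = 0}

/-- The weak* topology `σ(Δ, B₀(Σ))`, i.e. the topology induced by the evaluation maps
`p ↦ ∫ φ dp`, `φ ∈ B₀(Σ)`. -/
noncomputable def weakStar (𝓐 : Set (Set S)) : TopologicalSpace (Set S → ℝ) :=
  TopologicalSpace.induced
    (fun p => fun φ : {φ : S → ℝ // IsSimpleFn 𝓐 φ} => fint p φ.1)
    Pi.topologicalSpace

/-- `𝒞`: the weak*-lower semicontinuous convex functions `c : Δ → (-∞, ∞]`. -/
def Cscr (𝓐 : Set (Set S)) : Set ((Set S → ℝ) → EReal) :=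
  {c | (∀ p ∈ Δset 𝓐, ⊥ < c p) ∧
    (@LowerSemicontinuousOn (Set S → ℝ) EReal (weakStar 𝓐) _ c (Δset 𝓐)) ∧
    ∀ p ∈ Δset 𝓐, ∀ q ∈ Δset 𝓐, ∀ a b : ℝ, 0 ≤ a → 0 ≤ b → a + b = 1 →
      c (a • p + b • q) ≤ (a : EReal) * c p + (b : EReal) * c q}

/-- A subset `C ⊆ 𝒞` is grounded if `sup_{c ∈ C} min_{p ∈ Δ} c p = 0`. -/
def Grounded (𝓐 : Set (Set S)) (C : Set ((Set S → ℝ) → EReal)) : Prop :=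
  (⨆ c ∈ C, ⨅ p ∈ Δset 𝓐, c p) = 0

/-- `min_{p ∈ Δ} (∫ φ dp + c p)`. -/
noncomputable def minVal (𝓐 : Set (Set S)) (c : (Set S → ℝ) → EReal) (φ : S → ℝ) : EReal :=
  ⨅ p ∈ Δset 𝓐, ((fint p φ : EReal) + c p)

/-- `max_{q ∈ Δ} (∫ φ dq - b q)`. -/
noncomputable def maxVal (𝓐 : Set (Set S)) (b : (Set S → ℝ) → EReal) (φ : S → ℝ) : EReal :=
  ⨆ q ∈ Δset 𝓐, ((fint q φ : EReal) - b q)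

/-- `max_{c ∈ C} min_{p ∈ Δ} (∫ φ dp + c p)`. -/
noncomputable def maxminVal (𝓐 : Set (Set S)) (C : Set ((Set S → ℝ) → EReal))
    (φ : S → ℝ) : EReal :=
  ⨆ c ∈ C, minVal 𝓐 c φ

/-- `min_{b ∈ B} max_{q ∈ Δ} (∫ φ dq - b q)`. -/
noncomputable def minmaxVal (𝓐 : Set (Set S)) (B : Set ((Set S → ℝ) → EReal))
    (φ : S → ℝ) : EReal :=
  ⨅ b ∈ B, maxVal 𝓐 b φ

/-- `min_{p ∈ P} ∫ φ dp`. -/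
noncomputable def minPVal (P : Set (Set S → ℝ)) (φ : S → ℝ) : EReal :=
  ⨅ p ∈ P, (fint p φ : EReal)

/-- `max_{q ∈ Q} ∫ φ dq`. -/
noncomputable def maxQVal (Q : Set (Set S → ℝ)) (φ : S → ℝ) : EReal :=
  ⨆ q ∈ Q, (fint q φ : EReal)

/-- `max_{P ∈ Pfam} min_{p ∈ P} ∫ φ dp`. -/
noncomputable def maxminPVal (Pfam : Set (Set (Set S → ℝ))) (φ : S → ℝ) : EReal :=
  ⨆ P ∈ Pfam, minPVal P φ

/-- `min_{Q ∈ Qfam} max_{q ∈ Q} ∫ φ dq`. -/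
noncomputable def minmaxQVal (Qfam : Set (Set (Set S → ℝ))) (φ : S → ℝ) : EReal :=
  ⨅ Q ∈ Qfam, maxQVal Q φ

open Classical in
/-- The convex-analytic indicator `δ_P` of a set `P`. -/
noncomputable def ind (P : Set (Set S → ℝ)) : (Set S → ℝ) → EReal :=
  fun p => if p ∈ P then (0 : EReal) else ⊤

variable [AddCommGroup V] [Module ℝ V]

/-- `𝓕`: the simple acts, i.e. `Σ`-measurable maps `f : S → X` with finitely many values. -/
def Acts (𝓐 : Set (Set S)) (X : Set V) : Set (S → V) :=
  {f | (∀ s, f s ∈ X) ∧ (Set.range f).Finite ∧ ∀ v : V, f ⁻¹' {v} ∈ 𝓐}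

/-- The constant act with value `x`. -/
def constAct (x : V) : S → V := fun _ : S => x

/-- The mixture `α f + (1 - α) g` of two acts, defined statewise. -/
def mix (α : ℝ) (f g : S → V) : S → V := fun s => α • f s + (1 - α) • g s

/-- The statewise utility `u ∘ f` of an act. -/
def uAct (u : V → ℝ) (f : S → V) : S → ℝ := fun s => u (f s)

/-- `u : X → ℝ` is nonconstant and affine on `X`. -/
def IsNonconstAffine (X : Set V) (u : V → ℝ) : Prop :=
  (∀ x ∈ X, ∀ y ∈ X, ∀ t ∈ Set.Icc (0 : ℝ) 1,
      u (t • x + (1 - t) • y) = t * u x + (1 - t) * u y) ∧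
  ∃ x ∈ X, ∃ y ∈ X, u x ≠ u y

/-- A niveloidal preference: Axioms A1 (weak order), A2 (monotonicity), A3 (Archimedean)
and A4 (weak C-independence). -/
structure NiveloidalPref (𝓐 : Set (Set S)) (X : Set V)
    (R : (S → V) → (S → V) → Prop) : Prop where
  nontrivial : ∃ f ∈ Acts 𝓐 X, ∃ g ∈ Acts 𝓐 X, R f g ∧ ¬ R g f
  complete : ∀ f ∈ Acts 𝓐 X, ∀ g ∈ Acts 𝓐 X, R f g ∨ R g f
  transitive : ∀ f ∈ Acts 𝓐 X, ∀ g ∈ Acts 𝓐 X, ∀ h ∈ Acts 𝓐 X, R f g → R g h → R f h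
  monotone : ∀ f ∈ Acts 𝓐 X, ∀ g ∈ Acts 𝓐 X,
    (∀ s : S, R (constAct (f s)) (constAct (g s))) → R f g
  archimedean : ∀ f ∈ Acts 𝓐 X, ∀ g ∈ Acts 𝓐 X, ∀ h ∈ Acts 𝓐 X,
    (R f g ∧ ¬ R g f) → (R g h ∧ ¬ R h g) →
    ∃ α ∈ Set.Ioo (0 : ℝ) 1, ∃ β ∈ Set.Ioo (0 : ℝ) 1,
      (R (mix α f h) g ∧ ¬ R g (mix α f h)) ∧
      (R g (mix β f h) ∧ ¬ R (mix β f h) g)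
  weakCIndep : ∀ f ∈ Acts 𝓐 X, ∀ g ∈ Acts 𝓐 X, ∀ x ∈ X, ∀ y ∈ X,
    ∀ α ∈ Set.Ioo (0 : ℝ) 1,
    R (mix α f (constAct x)) (mix α g (constAct x)) →
    R (mix α f (constAct y)) (mix α g (constAct y))

/-- An invariant biseparable preference: Axioms A1 (weak order), A2 (monotonicity),
A3 (Archimedean) and A7 (C-independence). -/
structure IBPref (𝓐 : Set (Set S)) (X : Set V)
    (R : (S → V) → (S → V) → Prop) : Prop where
  nontrivial : ∃ f ∈ Acts 𝓐 X, ∃ g ∈ Acts 𝓐 X, R f g ∧ ¬ R g f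
  complete : ∀ f ∈ Acts 𝓐 X, ∀ g ∈ Acts 𝓐 X, R f g ∨ R g f
  transitive : ∀ f ∈ Acts 𝓐 X, ∀ g ∈ Acts 𝓐 X, ∀ h ∈ Acts 𝓐 X, R f g → R g h → R f h
  monotone : ∀ f ∈ Acts 𝓐 X, ∀ g ∈ Acts 𝓐 X,
    (∀ s : S, R (constAct (f s)) (constAct (g s))) → R f g
  archimedean : ∀ f ∈ Acts 𝓐 X, ∀ g ∈ Acts 𝓐 X, ∀ h ∈ Acts 𝓐 X,
    (R f g ∧ ¬ R g f) → (R g h ∧ ¬ R h g) →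
    ∃ α ∈ Set.Ioo (0 : ℝ) 1, ∃ β ∈ Set.Ioo (0 : ℝ) 1,
      (R (mix α f h) g ∧ ¬ R g (mix α f h)) ∧
      (R g (mix β f h) ∧ ¬ R (mix β f h) g)
  cIndep : ∀ f ∈ Acts 𝓐 X, ∀ g ∈ Acts 𝓐 X, ∀ x ∈ X, ∀ α ∈ Set.Ioo (0 : ℝ) 1,
    (R f g ↔ R (mix α f (constAct x)) (mix α g (constAct x)))

/-- Axiom A5 (uncertainty aversion). -/
def UncertaintyAverse (𝓐 : Set (Set S)) (X : Set V)
    (R : (S → V) → (S → V) → Prop) : Prop :=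
  ∀ f ∈ Acts 𝓐 X, ∀ g ∈ Acts 𝓐 X, ∀ α ∈ Set.Ioo (0 : ℝ) 1,
    R f g → R g f → R (mix α f g) f

/-- `xf` assigns to every act a certainty equivalent. -/
def IsCE (𝓐 : Set (Set S)) (X : Set V) (R : (S → V) → (S → V) → Prop)
    (xf : (S → V) → V) : Prop :=
  ∀ f ∈ Acts 𝓐 X, xf f ∈ X ∧ R f (constAct (xf f)) ∧ R (constAct (xf f)) f

/-- `C*`: the maximal candidate set of penalty functions. -/
def CstarOf (𝓐 : Set (Set S)) (X : Set V) (u : V → ℝ) (xf : (S → V) → V) :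
    Set ((Set S → ℝ) → EReal) :=
  {c | c ∈ Cscr 𝓐 ∧ ∀ f ∈ Acts 𝓐 X, minVal 𝓐 c (uAct u f) ≤ (u (xf f) : EReal)}

/-- `B*`: the maximal candidate set of reward functions. -/
def BstarOf (𝓐 : Set (Set S)) (X : Set V) (u : V → ℝ) (xf : (S → V) → V) :
    Set ((Set S → ℝ) → EReal) :=
  {b | b ∈ Cscr 𝓐 ∧ ∀ f ∈ Acts 𝓐 X, (u (xf f) : EReal) ≤ maxVal 𝓐 b (uAct u f)}

/-- `Pfam*`: the maximal family of prior sets (maxmin form). -/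
def PstarOf (𝓐 : Set (Set S)) (X : Set V) (u : V → ℝ) (xf : (S → V) → V) :
    Set (Set (Set S → ℝ)) :=
  {P | P ⊆ Δset 𝓐 ∧ P.Nonempty ∧ Convex ℝ P ∧ (@IsCompact _ (weakStar 𝓐) P) ∧
    ∀ f ∈ Acts 𝓐 X, minPVal P (uAct u f) ≤ (u (xf f) : EReal)}

/-- `Qfam*`: the maximal family of prior sets (minmax form). -/
def QstarOf (𝓐 : Set (Set S)) (X : Set V) (u : V → ℝ) (xf : (S → V) → V) :
    Set (Set (Set S → ℝ)) :=
  {Q | Q ⊆ Δset 𝓐 ∧ Q.Nonempty ∧ Convex ℝ Q ∧ (@IsCompact _ (weakStar 𝓐) Q) ∧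
    ∀ f ∈ Acts 𝓐 X, (u (xf f) : EReal) ≤ maxQVal Q (uAct u f)}

/-- `C` yields the maxmin representation of `R` with utility `u`. -/
def MaxminRep (𝓐 : Set (Set S)) (X : Set V) (R : (S → V) → (S → V) → Prop)
    (u : V → ℝ) (C : Set ((Set S → ℝ) → EReal)) : Prop :=
  ∀ f ∈ Acts 𝓐 X, ∀ g ∈ Acts 𝓐 X,
    (R f g ↔ maxminVal 𝓐 C (uAct u g) ≤ maxminVal 𝓐 C (uAct u f))

/-- All indicated maxima over `C` and minima over `Δ` are attained. -/
def MaxminAttained (𝓐 : Set (Set S)) (X : Set V) (u : V → ℝ)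
    (C : Set ((Set S → ℝ) → EReal)) : Prop :=
  ∀ f ∈ Acts 𝓐 X,
    (∀ c ∈ C, ∃ p ∈ Δset 𝓐,
      minVal 𝓐 c (uAct u f) = (fint p (uAct u f) : EReal) + c p) ∧
    ∃ c ∈ C, maxminVal 𝓐 C (uAct u f) = minVal 𝓐 c (uAct u f)

/-- `B` yields the minmax representation of `R` with utility `u`. -/
def MinmaxRep (𝓐 : Set (Set S)) (X : Set V) (R : (S → V) → (S → V) → Prop)
    (u : V → ℝ) (B : Set ((Set S → ℝ) → EReal)) : Prop :=
  ∀ f ∈ Acts 𝓐 X, ∀ g ∈ Acts 𝓐 X,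
    (R f g ↔ minmaxVal 𝓐 B (uAct u g) ≤ minmaxVal 𝓐 B (uAct u f))

/-- All indicated minima over `B` and maxima over `Δ` are attained. -/
def MinmaxAttained (𝓐 : Set (Set S)) (X : Set V) (u : V → ℝ)
    (B : Set ((Set S → ℝ) → EReal)) : Prop :=
  ∀ f ∈ Acts 𝓐 X,
    (∀ b ∈ B, ∃ q ∈ Δset 𝓐,
      maxVal 𝓐 b (uAct u f) = (fint q (uAct u f) : EReal) - b q) ∧
    ∃ b ∈ B, minmaxVal 𝓐 B (uAct u f) = maxVal 𝓐 b (uAct u f)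

/-- A family of nonempty, convex, weak*-compact subsets of `Δ`. -/
def IsPriorFamily (𝓐 : Set (Set S)) (Pfam : Set (Set (Set S → ℝ))) : Prop :=
  Pfam.Nonempty ∧ ∀ P ∈ Pfam,
    P ⊆ Δset 𝓐 ∧ P.Nonempty ∧ Convex ℝ P ∧ (@IsCompact _ (weakStar 𝓐) P)

/-- `Pfam` yields the maxmin representation of `R` with utility `u`. -/
def PRep (𝓐 : Set (Set S)) (X : Set V) (R : (S → V) → (S → V) → Prop)
    (u : V → ℝ) (Pfam : Set (Set (Set S → ℝ))) : Prop :=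
  ∀ f ∈ Acts 𝓐 X, ∀ g ∈ Acts 𝓐 X,
    (R f g ↔ maxminPVal Pfam (uAct u g) ≤ maxminPVal Pfam (uAct u f))

/-- All indicated maxima over `Pfam` and minima over `P` are attained. -/
def PAttained (𝓐 : Set (Set S)) (X : Set V) (u : V → ℝ)
    (Pfam : Set (Set (Set S → ℝ))) : Prop :=
  ∀ f ∈ Acts 𝓐 X,
    (∀ P ∈ Pfam, ∃ p ∈ P, minPVal P (uAct u f) = (fint p (uAct u f) : EReal)) ∧
    ∃ P ∈ Pfam, maxminPVal Pfam (uAct u f) = minPVal P (uAct u f)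

/-- `Qfam` yields the minmax representation of `R` with utility `u`. -/
def QRep (𝓐 : Set (Set S)) (X : Set V) (R : (S → V) → (S → V) → Prop)
    (u : V → ℝ) (Qfam : Set (Set (Set S → ℝ))) : Prop :=
  ∀ f ∈ Acts 𝓐 X, ∀ g ∈ Acts 𝓐 X,
    (R f g ↔ minmaxQVal Qfam (uAct u g) ≤ minmaxQVal Qfam (uAct u f))

/-- All indicated minima over `Qfam` and maxima over `Q` are attained. -/
def QAttained (𝓐 : Set (Set S)) (X : Set V) (u : V → ℝ)
    (Qfam : Set (Set (Set S → ℝ))) : Prop :=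
  ∀ f ∈ Acts 𝓐 X,
    (∀ Q ∈ Qfam, ∃ q ∈ Q, maxQVal Q (uAct u f) = (fint q (uAct u f) : EReal)) ∧
    ∃ Q ∈ Qfam, minmaxQVal Qfam (uAct u f) = maxQVal Q (uAct u f)

/-- `c₁ ≈_u c₂`: `c₁` and `c₂` induce the same variational functional on `B₀(Σ, u(X))`. -/
def ApproxEq (𝓐 : Set (Set S)) (X : Set V) (u : V → ℝ)
    (c₁ c₂ : (Set S → ℝ) → EReal) : Prop :=
  ∀ φ : S → ℝ, IsSimpleFn 𝓐 φ → (∀ s, φ s ∈ u '' X) →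
    minVal 𝓐 c₁ φ = minVal 𝓐 c₂ φ

/-- `R₁` is more ambiguity averse than `R₂`. -/
def MoreAmbiguityAverse (𝓐 : Set (Set S)) (X : Set V)
    (R₁ R₂ : (S → V) → (S → V) → Prop) : Prop :=
  ∀ f ∈ Acts 𝓐 X, ∀ x ∈ X, R₂ (constAct x) f → R₁ (constAct x) f

/-- `u₁` and `u₂` are positive affine transformations of each other on `X`. -/
def CardEquiv (X : Set V) (u₁ u₂ : V → ℝ) : Prop :=
  ∃ a b : ℝ, 0 < a ∧ ∀ x ∈ X, u₂ x = a * u₁ x + b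

/-- A capacity on `(S, Σ)`. -/
def IsCapacity (𝓐 : Set (Set S)) (π : Set S → ℝ) : Prop :=
  π ∅ = 0 ∧ π Set.univ = 1 ∧ ∀ A ∈ 𝓐, ∀ B ∈ 𝓐, A ⊆ B → π A ≤ π B

/-- The Choquet integral of a (simple) function against a capacity. -/
noncomputable def choquet (π : Set S → ℝ) (φ : S → ℝ) : ℝ :=
  (∫ t in Set.Ioi (0 : ℝ), π {s | t ≤ φ s}) +
    ∫ t in Set.Iio (0 : ℝ), (π {s | t ≤ φ s} - 1)

end Paper

namespace EReal

lemma coe_sub_coe_sub (c : ℝ) (x : EReal) : (c : EReal) - ((c : EReal) - x) = x := by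
  induction x using EReal.rec with
  | bot => simp
  | coe y => norm_cast; ring
  | top => simp

noncomputable def coeSubOrderIso (c : ℝ) : EReal ≃o ERealᵒᵈ where
  toFun x := OrderDual.toDual ((c : EReal) - x)
  invFun y := (c : EReal) - OrderDual.ofDual y
  left_inv := coe_sub_coe_sub c
  right_inv := coe_sub_coe_sub c
  map_rel_iff' {x y} := by
    change (c : EReal) - y ≤ (c : EReal) - x ↔ x ≤ y
    refine ⟨fun h => ?_, fun h => sub_le_sub le_rfl h⟩
    rw [← coe_sub_coe_sub c x, ← coe_sub_coe_sub c y]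
    exact sub_le_sub le_rfl h

lemma coe_sub_iInf {ι : Sort*} (c : ℝ) (f : ι → EReal) :
    (c : EReal) - ⨅ i, f i = ⨆ i, ((c : EReal) - f i) :=
  (coeSubOrderIso c).map_iInf f

lemma coe_sub_iSup {ι : Sort*} (c : ℝ) (f : ι → EReal) :
    (c : EReal) - ⨆ i, f i = ⨅ i, ((c : EReal) - f i) :=
  (coeSubOrderIso c).map_iSup f

lemma le_coe_sub_comm {c : ℝ} {x y : EReal} : x ≤ (c : EReal) - y ↔ y ≤ (c : EReal) - x :=
  (coeSubOrderIso c).le_symm_apply.symm.trans (by rfl)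

end EReal

lemma LowerSemicontinuousOn.ereal_neg {α : Type*} [TopologicalSpace α] {f : α → EReal}
    {s : Set α} (hf : LowerSemicontinuousOn f s) : UpperSemicontinuousOn (fun x => -f x) s :=
  fun x hx y hy => (hf x hx (-y) (EReal.neg_lt_comm.mp hy)).mono fun _ h => EReal.neg_lt_comm.mp h

lemma LowerSemicontinuousOn.of_le_topology {α β : Type*} [Preorder β] {t₁ t₂ : TopologicalSpace α}
    (h : t₁ ≤ t₂) {f : α → β} {s : Set α} (hf : @LowerSemicontinuousOn α β t₂ _ f s) :
    @LowerSemicontinuousOn α β t₁ _ f s :=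
  fun x hx y hy => (hf x hx y hy).filter_mono (inf_le_inf_right _ (nhds_mono h))

namespace Paper

variable {S V : Type*} {𝓐 : Set (Set S)}

lemma IsSetAlg.univ_mem (hA : IsSetAlg 𝓐) : (Set.univ : Set S) ∈ 𝓐 := by
  simpa using hA.compl_mem ∅ hA.empty_mem

lemma mem_Icc_of_mem_Δset (hA : IsSetAlg 𝓐) {p : Set S → ℝ} (hp : p ∈ Δset 𝓐) (A : Set S) :
    p A ∈ Set.Icc (0 : ℝ) 1 := by
  obtain ⟨huniv, hnonneg, hadd, hzero⟩ := hp
  by_cases hA' : A ∈ 𝓐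
  · have hAc := hA.compl_mem A hA'
    have := hadd A hA' Aᶜ hAc disjoint_compl_right
    rw [Set.union_compl_self, huniv] at this
    exact ⟨hnonneg A hA', by linarith [hnonneg Aᶜ hAc]⟩
  · simp [hzero A hA']

lemma fint_const [Nonempty S] {p : Set S → ℝ} (hp : p ∈ Δset 𝓐) (c : ℝ) :
    fint p (fun _ => c) = c := by
  simp [fint, Set.range_const, hp.1]

open Classical in
noncomputable def dirac (𝓐 : Set (Set S)) (s₀ : S) : Set S → ℝ :=
  fun A => if A ∈ 𝓐 ∧ s₀ ∈ A then 1 else 0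

lemma dirac_mem_Δset (hA : IsSetAlg 𝓐) (s₀ : S) : dirac 𝓐 s₀ ∈ Δset 𝓐 := by
  refine ⟨by simp [dirac, hA.univ_mem], fun A _ => by unfold dirac; split_ifs <;> norm_num,
    fun A hAm B hBm hd => ?_, fun A hAm => by simp [dirac, hAm]⟩
  have hAB := hA.union_mem A hAm B hBm
  by_cases h₁ : s₀ ∈ A
  · have h₂ : s₀ ∉ B := Set.disjoint_left.mp hd h₁
    simp [dirac, h₁, h₂, hAm, hBm, hAB]
  · by_cases h₂ : s₀ ∈ B <;> simp [dirac, h₁, h₂, hAm, hBm, hAB]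

lemma Δset_nonempty [Nonempty S] (hA : IsSetAlg 𝓐) : (Δset 𝓐).Nonempty :=
  ⟨_, dirac_mem_Δset hA (Classical.arbitrary S)⟩

lemma continuous_fint (φ : S → ℝ) : Continuous fun p : Set S → ℝ => fint p φ := by
  unfold fint
  split_ifs
  · exact continuous_finsetSum _ fun t _ => continuous_const.mul (continuous_apply _)
  · exact continuous_const

lemma isClosed_Δset : IsClosed (Δset 𝓐) := by
  simp only [Δset, Set.ofPred_and, Set.ofPred_forall]
  refine (isClosed_eq (continuous_apply _) continuous_const).inter
    ((isClosed_biInter fun A _ => isClosed_le continuous_const (continuous_apply A)).inter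
    ((isClosed_biInter fun A _ => isClosed_biInter fun B _ => isClosed_iInter fun _ =>
      isClosed_eq (f := fun p : Set S → ℝ => p (A ∪ B)) (g := fun p => p A + p B)
        (continuous_apply _) ((continuous_apply A).add (continuous_apply B))).inter
    (isClosed_biInter fun A _ => isClosed_eq (continuous_apply A) continuous_const)))

lemma isCompact_Δset (hA : IsSetAlg 𝓐) : IsCompact (Δset 𝓐) :=
  (isCompact_univ_pi fun _ => isCompact_Icc).of_isClosed_subset isClosed_Δset
    fun _ hp A _ => mem_Icc_of_mem_Δset hA hp A

lemma pi_le_weakStar : (Pi.topologicalSpace : TopologicalSpace (Set S → ℝ)) ≤ weakStar 𝓐 :=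
  continuous_iff_le_induced.mp (continuous_pi fun φ => continuous_fint φ.1)

lemma exists_maxVal_eq [Nonempty S] (hA : IsSetAlg 𝓐) {b : (Set S → ℝ) → EReal}
    (hb : b ∈ Cscr 𝓐) (φ : S → ℝ) :
    ∃ q ∈ Δset 𝓐, maxVal 𝓐 b φ = (fint q φ : EReal) - b q := by
  have hb_lsc : LowerSemicontinuousOn b (Δset 𝓐) := hb.2.1.of_le_topology pi_le_weakStar
  have hint : Continuous fun q => (fint q φ : EReal) :=
    continuous_coe_real_ereal.comp (continuous_fint φ)
  have husc : UpperSemicontinuousOn (fun q => (fint q φ : EReal) - b q) (Δset 𝓐) :=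
    fun q hq => hint.continuousAt.continuousWithinAt.upperSemicontinuousWithinAt.add'
      (hb_lsc.ereal_neg q hq) (EReal.continuousAt_add (by simp) (by simp))
  obtain ⟨q, hq, hmax⟩ := husc.exists_isMaxOn (Δset_nonempty hA) (isCompact_Δset hA)
  exact ⟨q, hq, le_antisymm (iSup₂_le hmax)
    (le_iSup₂ (f := fun q (_ : q ∈ Δset 𝓐) => (fint q φ : EReal) - b q) q hq)⟩

section Constant

variable [Nonempty S]

lemma maxVal_const (b : (Set S → ℝ) → EReal) (c : ℝ) :
    maxVal 𝓐 b (fun _ => c) = (c : EReal) - ⨅ q ∈ Δset 𝓐, b q := by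
  simp only [maxVal, EReal.coe_sub_iInf]
  exact biSup_congr fun q hq => by rw [fint_const hq]

lemma Grounded.minmaxVal_const {B : Set ((Set S → ℝ) → EReal)} (hB : Grounded 𝓐 B) (c : ℝ) :
    minmaxVal 𝓐 B (fun _ => c) = c := by
  simp only [minmaxVal, maxVal_const, ← EReal.coe_sub_iSup]
  rw [hB, sub_zero]

end Constant

section Bstar

variable {X : Set V} {R : (S → V) → (S → V) → Prop} {u : V → ℝ} {xf : (S → V) → V}

lemma constAct_mem_Acts (hA : IsSetAlg 𝓐) {x : V} (hx : x ∈ X) : constAct x ∈ Acts 𝓐 X := by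
  classical
  refine ⟨fun _ => hx, Set.finite_range_const, fun v => ?_⟩
  change (fun _ : S => x) ⁻¹' {v} ∈ 𝓐
  rw [Set.preimage_const]
  split_ifs
  exacts [hA.univ_mem, hA.empty_mem]

variable [Nonempty S]

lemma MinmaxRep.minmaxVal_eq (hA : IsSetAlg 𝓐) {B : Set ((Set S → ℝ) → EReal)}
    (hB : Grounded 𝓐 B) (hrep : MinmaxRep 𝓐 X R u B) (hxf : IsCE 𝓐 X R xf) {f : S → V}
    (hf : f ∈ Acts 𝓐 X) : minmaxVal 𝓐 B (uAct u f) = u (xf f) := by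
  obtain ⟨hxfX, hfx, hxf'⟩ := hxf f hf
  have hx := constAct_mem_Acts hA hxfX
  have hval : minmaxVal 𝓐 B (uAct u (constAct (xf f))) = u (xf f) :=
    hB.minmaxVal_const (u (xf f))
  have hle := (hrep _ hx f hf).mp hxf'
  have hge := (hrep f hf _ hx).mp hfx
  rw [hval] at hle hge
  exact le_antisymm hle hge

section

variable (hA : IsSetAlg 𝓐) (hxf : IsCE 𝓐 X R xf) {B : Set ((Set S → ℝ) → EReal)}
  (hBC : B ⊆ Cscr 𝓐) (hB : Grounded 𝓐 B) (hrep : MinmaxRep 𝓐 X R u B)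
include hA hxf hBC hB hrep

lemma subset_BstarOf : B ⊆ BstarOf 𝓐 X u xf := fun _ hb =>
  ⟨hBC hb, fun _ hf => hrep.minmaxVal_eq hA hB hxf hf ▸ biInf_le (fun b => maxVal 𝓐 b _) hb⟩

lemma minmaxVal_BstarOf {f : S → V} (hf : f ∈ Acts 𝓐 X) :
    minmaxVal 𝓐 (BstarOf 𝓐 X u xf) (uAct u f) = u (xf f) :=
  le_antisymm
    ((iInf_le_iInf_of_subset (subset_BstarOf hA hxf hBC hB hrep)).trans
      (hrep.minmaxVal_eq hA hB hxf hf).le)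
    (le_iInf₂ fun _ hb => hb.2 f hf)

lemma grounded_BstarOf (hX : X.Nonempty) : Grounded 𝓐 (BstarOf 𝓐 X u xf) := by
  refine le_antisymm (iSup₂_le fun b hb => ?_)
    (hB ▸ iSup_le_iSup_of_subset (subset_BstarOf hA hxf hBC hB hrep))
  obtain ⟨x, hx⟩ := hX
  have hc := constAct_mem_Acts hA hx
  have hce : (u (xf (constAct x)) : EReal) = u x := by
    rw [← hrep.minmaxVal_eq hA hB hxf hc]
    exact hB.minmaxVal_const (u x)
  have h : (u x : EReal) ≤ (u x : EReal) - ⨅ q ∈ Δset 𝓐, b q := by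
    rw [← maxVal_const, ← hce]
    exact hb.2 _ hc
  simpa [← EReal.coe_sub] using EReal.le_coe_sub_comm.mp h

lemma minmaxAttained_BstarOf (hatt : MinmaxAttained 𝓐 X u B) :
    MinmaxAttained 𝓐 X u (BstarOf 𝓐 X u xf) := fun f hf => by
  obtain ⟨b, hb, hb_eq⟩ := (hatt f hf).2
  refine ⟨fun b hb => exists_maxVal_eq hA hb.1 _, b, subset_BstarOf hA hxf hBC hB hrep hb, ?_⟩
  rw [minmaxVal_BstarOf hA hxf hBC hB hrep hf, ← hrep.minmaxVal_eq hA hB hxf hf, hb_eq]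

lemma minmaxRep_BstarOf : MinmaxRep 𝓐 X R u (BstarOf 𝓐 X u xf) := fun f hf g hg => by
  rw [hrep f hf g hg, minmaxVal_BstarOf hA hxf hBC hB hrep hf,
    minmaxVal_BstarOf hA hxf hBC hB hrep hg, hrep.minmaxVal_eq hA hB hxf hf,
    hrep.minmaxVal_eq hA hB hxf hg]

end

end Bstar

theorem stmt3_general {S V : Type*} [Nonempty S]
    (𝓐 : Set (Set S)) (hA : IsSetAlg 𝓐)
    (X : Set V) (hX : X.Nonempty)
    (R : (S → V) → (S → V) → Prop)
    (u : V → ℝ)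
    (hrep : ∃ B ⊆ Cscr 𝓐, Grounded 𝓐 B ∧ MinmaxAttained 𝓐 X u B ∧
      MinmaxRep 𝓐 X R u B)
    (xf : (S → V) → V) (hxf : IsCE 𝓐 X R xf) :
    Grounded 𝓐 (BstarOf 𝓐 X u xf) ∧
    (∀ f ∈ Acts 𝓐 X,
      minmaxVal 𝓐 (BstarOf 𝓐 X u xf) (uAct u f) = (u (xf f) : EReal)) ∧
    MinmaxAttained 𝓐 X u (BstarOf 𝓐 X u xf) ∧
    MinmaxRep 𝓐 X R u (BstarOf 𝓐 X u xf) ∧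
    ∀ B ⊆ Cscr 𝓐, Grounded 𝓐 B → MinmaxAttained 𝓐 X u B → MinmaxRep 𝓐 X R u B →
      B ⊆ BstarOf 𝓐 X u xf := by
  obtain ⟨B₀, hB₀C, hB₀, hB₀att, hB₀rep⟩ := hrep
  exact ⟨grounded_BstarOf hA hxf hB₀C hB₀ hB₀rep hX,
    fun _ => minmaxVal_BstarOf hA hxf hB₀C hB₀ hB₀rep,
    minmaxAttained_BstarOf hA hxf hB₀C hB₀ hB₀rep hB₀att,
    minmaxRep_BstarOf hA hxf hB₀C hB₀ hB₀rep,
    fun _ hBC hB _ hrep => subset_BstarOf hA hxf hBC hB hrep⟩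

theorem stmt3 {S V : Type*} [Nonempty S] [AddCommGroup V] [Module ℝ V]
    (𝓐 : Set (Set S)) (hA : IsSetAlg 𝓐)
    (X : Set V) (hX : X.Nonempty) (hXc : Convex ℝ X)
    (R : (S → V) → (S → V) → Prop) (hpref : NiveloidalPref 𝓐 X R)
    (u : V → ℝ) (hu : IsNonconstAffine X u) (h0 : (0 : ℝ) ∈ interior (u '' X))
    (hrep : ∃ B ⊆ Cscr 𝓐, Grounded 𝓐 B ∧ MinmaxAttained 𝓐 X u B ∧
      MinmaxRep 𝓐 X R u B)
    (xf : (S → V) → V) (hxf : IsCE 𝓐 X R xf) :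
    Grounded 𝓐 (BstarOf 𝓐 X u xf) ∧
    (∀ f ∈ Acts 𝓐 X,
      minmaxVal 𝓐 (BstarOf 𝓐 X u xf) (uAct u f) = (u (xf f) : EReal)) ∧
    MinmaxAttained 𝓐 X u (BstarOf 𝓐 X u xf) ∧
    MinmaxRep 𝓐 X R u (BstarOf 𝓐 X u xf) ∧
    ∀ B ⊆ Cscr 𝓐, Grounded 𝓐 B → MinmaxAttained 𝓐 X u B → MinmaxRep 𝓐 X R u B →
      B ⊆ BstarOf 𝓐 X u xf :=
  stmt3_general 𝓐 hA X hX R u hrep xf hxf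

end Paper
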